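/- If A is an optimal alignment between two strings X and Y of equal length, then for every index i with 0 ≤ i ≤ |X|, it holds that |i − A(i)| ≤ ED(X, Y)/2. -/

import Mathlib

/-- The substring of `X` with indices in `{i, ..., j-1}` (out-of-bounds indices clipped). -/
def listSub {α : Type*} (X : List α) (i j : ℕ) : List α := (X.take j).drop i

/-- Substring with possibly negative (integer) endpoints, clipped. -/
def listSubZ {α : Type*} (X : List α) (i j : ℤ) : List α := listSub X i.toNat j.toNat

namespace Levenshtein

/-- Costs of the edit operations (as in the Mathlib file `Data/List/EditDistance/Defs`,
since removed from Mathlib). -/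
structure Cost (α β δ : Type*) where
  delete : α → δ
  insert : β → δ
  substitute : α → β → δ

/-- Unit costs, as in the removed Mathlib `Levenshtein.defaultCost`. -/
def defaultCost {α : Type*} [DecidableEq α] : Cost α α ℕ where
  delete _ := 1
  insert _ := 1
  substitute a b := if a = b then 0 else 1

end Levenshtein

/-- The weighted Levenshtein distance, given by the recursion that the removed Mathlib
`levenshtein` satisfied (`levenshtein_nil_nil`, `levenshtein_nil_cons`,
`levenshtein_cons_nil`, `levenshtein_cons_cons`). -/
def levenshtein {α β δ : Type*} [AddZeroClass δ] [Min δ] (C : Levenshtein.Cost α β δ) :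
    List α → List β → δ
  | [], [] => 0
  | [], y :: ys => C.insert y + levenshtein C [] ys
  | x :: xs, [] => C.delete x + levenshtein C xs []
  | x :: xs, y :: ys =>
    min (C.delete x + levenshtein C xs (y :: ys))
      (min (C.insert y + levenshtein C (x :: xs) ys) (C.substitute x y + levenshtein C xs ys))

/-- Edit distance (Levenshtein distance) with unit costs. -/
def ED {α : Type*} [DecidableEq α] (X Y : List α) : ℕ :=
  levenshtein Levenshtein.defaultCost X Y

/-- An alignment between `X` and `Y`: a monotone non-decreasing map of positions with
`A 0 = 0` and `A |X| = |Y|`. -/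
def IsAlignment {α : Type*} (X Y : List α) (A : ℕ → ℕ) : Prop :=
  A 0 = 0 ∧ A X.length = Y.length ∧ ∀ i j, i ≤ j → j ≤ X.length → A i ≤ A j

/-- An optimal alignment: the edit distance decomposes along the alignment. -/
def IsOptimalAlignment {α : Type*} [DecidableEq α] (X Y : List α) (A : ℕ → ℕ) : Prop :=
  IsAlignment X Y A ∧
    ED X Y = ∑ i ∈ Finset.range X.length,
      ED (listSub X i (i + 1)) (listSub Y (A i) (A (i + 1)))

/-!
Write `d i = A i - i` for the drift of the alignment at position `i`. The `i`-th term of the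
optimal decomposition is the edit distance between one letter and a block of `A (i+1) - A i`
letters, hence at least `|d (i+1) - d i|`. Summing over `i < k` bounds the first `k` terms by
`|d k - d 0| = |d k|`, and summing over `k ≤ i < |X|` bounds the remaining ones by
`|d |X| - d k| = |d k|`, because `d 0 = d |X| = 0` for strings of equal length.
-/

open Finset

theorem natAbs_length_sub_length_le_ED {α : Type*} [DecidableEq α] :
    ∀ X Y : List α, ((X.length : ℤ) - Y.length).natAbs ≤ ED X Y
  | [], [] => by simp [ED, levenshtein]
  | [], y :: ys => by
    have := natAbs_length_sub_length_le_ED [] ys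
    simp only [ED, levenshtein, Levenshtein.defaultCost, List.length_nil,
      List.length_cons] at this ⊢
    omega
  | x :: xs, [] => by
    have := natAbs_length_sub_length_le_ED xs []
    simp only [ED, levenshtein, Levenshtein.defaultCost, List.length_nil,
      List.length_cons] at this ⊢
    omega
  | x :: xs, y :: ys => by
    have hdel := natAbs_length_sub_length_le_ED xs (y :: ys)
    have hins := natAbs_length_sub_length_le_ED (x :: xs) ys
    have hsub := natAbs_length_sub_length_le_ED xs ys
    simp only [ED, levenshtein, Levenshtein.defaultCost, List.length_cons] at hdel hins hsub ⊢
    split <;> omega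

theorem length_listSub {α : Type*} (X : List α) {i j : ℕ} (hj : j ≤ X.length) :
    (listSub X i j).length = j - i := by
  simp [listSub, hj]

theorem natAbs_sub_le_sum_Ico (g : ℕ → ℤ) {a b : ℕ} (hab : a ≤ b) :
    (g b - g a).natAbs ≤ ∑ i ∈ Ico a b, (g (i + 1) - g i).natAbs := by
  induction b, hab using Nat.le_induction with
  | base => simp
  | succ b hab ih =>
    rw [sum_Ico_succ_top hab]
    calc (g (b + 1) - g a).natAbs = (g b - g a + (g (b + 1) - g b)).natAbs := by ring_nf
      _ ≤ _ := (Int.natAbs_add_le _ _).trans (by omega)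

namespace IsAlignment

variable {α : Type*} [DecidableEq α] {X Y : List α} {A : ℕ → ℕ}

theorem natAbs_drift_step_le_ED (hA : IsAlignment X Y A) {i : ℕ} (hi : i < X.length) :
    ((A (i + 1) - (i + 1 : ℕ) : ℤ) - (A i - i)).natAbs ≤
      ED (listSub X i (i + 1)) (listSub Y (A i) (A (i + 1))) := by
  obtain ⟨-, hAlen, hmono⟩ := hA
  have hstep : A i ≤ A (i + 1) := hmono i (i + 1) (by omega) hi
  have hAY : A (i + 1) ≤ Y.length := hAlen ▸ hmono (i + 1) X.length hi le_rfl
  have hED := natAbs_length_sub_length_le_ED (listSub X i (i + 1)) (listSub Y (A i) (A (i + 1)))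
  rw [length_listSub X hi, length_listSub Y hAY] at hED
  omega

theorem natAbs_drift_sub_le_sum_ED (hA : IsAlignment X Y A) {a b : ℕ} (hab : a ≤ b)
    (hb : b ≤ X.length) :
    ((A b - b : ℤ) - (A a - a)).natAbs ≤
      ∑ i ∈ Ico a b, ED (listSub X i (i + 1)) (listSub Y (A i) (A (i + 1))) :=
  (natAbs_sub_le_sum_Ico (fun i ↦ (A i - i : ℤ)) hab).trans <| sum_le_sum fun i hi ↦
    hA.natAbs_drift_step_le_ED <| by simp only [mem_Ico] at hi; omega

end IsAlignment

/-- Alignments have small stretch: if `A` is an optimal alignment between equal-length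
strings `X` and `Y`, then `|i - A(i)| ≤ ED(X,Y)/2` for all `0 ≤ i ≤ |X|`. -/
theorem alignments_have_small_stretch {α : Type*} [DecidableEq α]
    (X Y : List α) (hlen : X.length = Y.length) (A : ℕ → ℕ)
    (hopt : IsOptimalAlignment X Y A) :
    ∀ i ≤ X.length, 2 * ((i : ℤ) - (A i : ℤ)).natAbs ≤ ED X Y := by
  intro k hk
  obtain ⟨hA, hED⟩ := hopt
  have hprefix := hA.natAbs_drift_sub_le_sum_ED (Nat.zero_le k) hk
  have hsuffix := hA.natAbs_drift_sub_le_sum_ED hk le_rfl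
  rw [hA.1] at hprefix
  rw [hA.2.1, ← hlen] at hsuffix
  rw [hED, range_eq_Ico, ← sum_Ico_consecutive _ (Nat.zero_le k) hk]
  omega
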